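/- If a voting rule F is Condorcet consistent, then its iterated version under M2 is Condorcet consistent: if the truthful profile has a Condorcet winner c, then c remains the Condorcet winner of every profile along the iteration, and hence the outcome at every step (in particular after convergence) is c. -/
import Mathlib


/-- A ballot is a strict linear order over `m` candidates, identified with a
ranking: `b c` is the position of candidate `c` (position `0` is the top). -/
abbrev Ballot (m : ℕ) := Fin m ≃ Fin m

/-- A profile assigns a ballot to each of the `n` voters. -/
abbrev Profile (n m : ℕ) := Fin n → Ballot m

/-- In ballot `b`, candidate `c` is ranked strictly above candidate `c'`. -/
abbrev Prefers {m : ℕ} (b : Ballot m) (c c' : Fin m) : Prop := b c < b c'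

/-- Move candidate `c` to the top of ballot `b`: every candidate ranked above
`c` is shifted down by one position, and all other candidates keep their
positions. -/
def moveToTop {m : ℕ} (b : Ballot m) (c : Fin m) : Ballot m :=
  b.trans (Fin.cycleRange (b c))

/-- The top-ranked candidate of a ballot. -/
def topCand {m : ℕ} (hm : 0 < m) (b : Ballot m) : Fin m := b.symm ⟨0, hm⟩

/-- The second-ranked candidate of a ballot. -/
def secondCand {m : ℕ} (hm : 2 ≤ m) (b : Ballot m) : Fin m := b.symm ⟨1, by omega⟩

/-- An M2 manipulation move by voter `i`, with respect to the voting rule `F`,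
the truthful profile `truthful`, the current profile `p` and the resulting
profile `p'`: voter `i` moves to the top of her current ballot a candidate `c`
ranked above the current winner `F p` in her current ballot, which she
truthfully prefers to `F p`, which thereby becomes the new winner, and which is
her truthfully most preferred candidate among those with these properties. -/
def M2Move {n m : ℕ} (F : Profile n m → Fin m)
    (truthful p p' : Profile n m) (i : Fin n) : Prop :=
  ∃ c : Fin m,
    Prefers (p i) c (F p) ∧
    Prefers (truthful i) c (F p) ∧
    p' = Function.update p i (moveToTop (p i) c) ∧
    F p' = c ∧
    (∀ c' : Fin m, Prefers (p i) c' (F p) → Prefers (truthful i) c' (F p) →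
      F (Function.update p i (moveToTop (p i) c')) = c' →
      c' = c ∨ Prefers (truthful i) c c')

/-- The number of voters ranking candidate `a` above candidate `b`. -/
def numPrefer {n m : ℕ} (p : Profile n m) (a b : Fin m) : ℕ :=
  (Finset.univ.filter (fun i => Prefers (p i) a b)).card

/-- A strict majority of voters rank `a` above `b`. -/
abbrev Beats {n m : ℕ} (p : Profile n m) (a b : Fin m) : Prop :=
  n < 2 * numPrefer p a b

/-- `c` is the Condorcet winner of profile `p`: for every other candidate `a`,
a strict majority of the `n` voters rank `c` above `a`. -/
def CondorcetWinner {n m : ℕ} (p : Profile n m) (c : Fin m) : Prop :=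
  ∀ a : Fin m, a ≠ c → n < 2 * numPrefer p c a

/-- A voting rule is Condorcet consistent if it elects the Condorcet winner
whenever one exists. -/
def CondorcetConsistent {n m : ℕ} (F : Profile n m → Fin m) : Prop :=
  ∀ (p : Profile n m) (c : Fin m), CondorcetWinner p c → F p = c

lemma coe_cycleRange_le {m : ℕ} (k v : Fin m) (h : v ≤ k) :
    (Fin.cycleRange k v : ℕ) ≤ (k : ℕ) := by
  rcases m with _ | m
  · exact v.elim0
  · rw [Fin.coe_cycleRange_of_le h]
    split
    · omega
    · have : v < k := lt_of_le_of_ne h (by assumption)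
      have := Fin.lt_iff_val_lt_val.mp this
      omega

/-- Moving to the top a candidate `c0` ranked above `c` does not change
pairwise comparisons between `c` and any other candidate. -/
lemma prefers_moveToTop_iff {m : ℕ} (b : Ballot m) (c0 c a : Fin m)
    (h : b c0 < b c) : Prefers (moveToTop b c0) c a ↔ Prefers b c a := by
  rcases m with _ | m
  · exact c.elim0
  unfold Prefers moveToTop
  simp only [Equiv.trans_apply]
  rw [Fin.cycleRange_of_gt h]
  rcases lt_or_ge (b c0) (b a) with ha | ha
  · rw [Fin.cycleRange_of_gt ha]
  · have h1 : (Fin.cycleRange (b c0) (b a) : ℕ) ≤ (b c0 : ℕ) :=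
      coe_cycleRange_le _ _ ha
    have h2 := Fin.lt_iff_val_lt_val.mp h
    have h3 := Fin.le_iff_val_le_val.mp ha
    constructor <;> intro hlt <;>
      exact absurd (Fin.lt_iff_val_lt_val.mp hlt) (by omega)

/-- If `F` is Condorcet consistent, then its iterated version
under M2 is Condorcet consistent: if the truthful profile has a Condorcet
winner `c`, then `c` remains the Condorcet winner of every profile along any
M2 iteration, and the outcome at every step (in particular after convergence)
is `c`. -/
theorem m2_preserves_condorcet_consistency {n m : ℕ}
    (F : Profile n m → Fin m) (hF : CondorcetConsistent F)
    (truthful : Profile n m) (c : Fin m) (hc : CondorcetWinner truthful c)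
    (p : ℕ → Profile n m) (h0 : p 0 = truthful)
    (hstep : ∀ k, p (k+1) = p k ∨ ∃ i, M2Move F truthful (p k) (p (k+1)) i) :
    ∀ k, CondorcetWinner (p k) c ∧ F (p k) = c := by
  intro k
  induction k with
  | zero =>
    rw [h0]
    exact ⟨hc, hF _ _ hc⟩
  | succ k ih =>
    rcases hstep k with h | ⟨i, c0, hpc, _, hupd, _, _⟩
    · rw [h]; exact ih
    · rw [ih.2] at hpc
      have hcw : CondorcetWinner (p (k+1)) c := by
        intro a ha
        have : numPrefer (p (k+1)) c a = numPrefer (p k) c a := by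
          unfold numPrefer
          congr 1
          apply Finset.filter_congr
          intro j _
          rw [hupd]
          rcases eq_or_ne j i with rfl | hj
          · rw [Function.update_self]
            exact prefers_moveToTop_iff _ _ _ _ hpc
          · rw [Function.update_of_ne hj]
        rw [this]
        exact ih.1 a ha
      exact ⟨hcw, hF _ _ hcw⟩
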